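/- In a 0-weak 1-hypercategory over the prototype hypergraph Σ with Σ₀ = {a, a*}, Σ₁ = {b, b*}, δb = (a*, a): if f, g : A → B are 1-cells and there exists a universal 2-cell u : f → g, then f = g. -/
import Mathlib


/-- Pure `1`-pasting diagrams over the prototype hypergraph
`Σ₀ = {a, a*}, Σ₁ = {b, b*}, δb = (a*, a)`: nonempty composable sequences of
`1`-cells. -/
inductive PSeq {Obj : Type} (Hom : Obj → Obj → Type) : Obj → Obj → Type
  | single {A B : Obj} : Hom A B → PSeq Hom A B
  | cons {A B C : Obj} : Hom A B → PSeq Hom B C → PSeq Hom A C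

/-- A `0`-weak `1`-hypercategory over the prototype hypergraph `Σ` with
`Σ₀ = {a, a*}`, `Σ₁ = {b, b*}`, `δ b = (a*, a)`.  Its `0`-cells are the objects,
its `1`-cells the elements of `Hom`, and `Two d g` is the type of `2`-cells
(composers) from the pure `1`-pasting diagram `d` to the `1`-cell `g`, with the
distinguished class `Univ` of universal `2`-cells.  The fields record:
(H1) every pure `1`-pasting diagram has a universal composer; `0`-weakness:
every pure pasting diagram of dimension `> 0` has a unique composite;
(H2) universal `2`-cells have transposes with conjugate frame; (H3) universal
cells are closed under pasting (vertical composition and substitution of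
composites into a pasting diagram); and every object, regarded as a
`0`-pasting diagram, has universal composers — the quasi-identities `QI`. -/
structure ZeroWeakOneHC where
  Obj : Type
  Hom : Obj → Obj → Type
  Two : ∀ {A B : Obj}, PSeq Hom A B → Hom A B → Type
  Univ : ∀ {A B : Obj} {d : PSeq Hom A B} {g : Hom A B}, Two d g → Prop
  /-- (H1): every pure `1`-pasting diagram has a universal composer. -/
  exists_univ_composer : ∀ {A B : Obj} (d : PSeq Hom A B), ∃ g, ∃ u : Two d g, Univ u
  /-- `0`-weakness: the composite of a pure `1`-pasting diagram is unique. -/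
  unique_composite : ∀ {A B : Obj} {d : PSeq Hom A B} {g g' : Hom A B},
    Two d g → Two d g' → g = g'
  /-- (H2): a universal `2`-cell `u : f → g` has a universal transpose
  `u† : g → f` with conjugate frame. -/
  transpose : ∀ {A B : Obj} {f g : Hom A B} (u : Two (.single f) g), Univ u →
    ∃ u' : Two (.single g) f, Univ u'
  /-- (H3): vertical pasting of universal `2`-cells is universal. -/
  vcomp : ∀ {A B : Obj} {d : PSeq Hom A B} {g h : Hom A B}
    (u : Two d g) (v : Two (.single g) h), Univ u → Univ v → ∃ w : Two d h, Univ w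
  /-- pasting: a composite of `(g,h)` substituted into a composite of
  `(f, g∘h)` composes the diagram `(f,g,h)`. -/
  subst : ∀ {A B C D : Obj} {f : Hom A B} {g : Hom B C} {h : Hom C D}
    {gh : Hom B D} {l : Hom A D},
    Two (.cons g (.single h)) gh → Two (.cons f (.single gh)) l →
    Nonempty (Two (.cons f (.cons g (.single h))) l)
  /-- pasting: a composite of `(f,g)` substituted into a composite of
  `(f∘g, h)` composes the diagram `(f,g,h)`. -/
  subst' : ∀ {A B C D : Obj} {f : Hom A B} {g : Hom B C} {h : Hom C D}
    {fg : Hom A C} {r : Hom A D},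
    Two (.cons f (.single g)) fg → Two (.cons fg (.single h)) r →
    Nonempty (Two (.cons f (.cons g (.single h))) r)
  /-- `QI u`: the `1`-cell `u : A → A` is a universal composer of the object
  `A` regarded as a `0`-pasting diagram (a quasi-identity). -/
  QI : ∀ {A : Obj}, Hom A A → Prop
  /-- (H1) in dimension `0`: every object has a quasi-identity. -/
  qi_exists : ∀ A : Obj, ∃ u : Hom A A, QI u

/-- In a `0`-weak `1`-hypercategory over the prototype `Σ`: if `f, g : A → B`
are `1`-cells and there is a universal `2`-cell `u : f → g`, then `f = g`. -/
theorem stmt_17 (H : ZeroWeakOneHC) {A B : H.Obj} (f g : H.Hom A B)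
    (u : H.Two (.single f) g) (hu : H.Univ u) : f = g := by
  obtain ⟨u', hu'⟩ := H.transpose u hu
  obtain ⟨w, -⟩ := H.vcomp u u' hu hu'
  exact H.unique_composite w u
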